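/- The 5-dimensional nilpotent commutative associative algebra A₀₆ degenerates to A₀₉: the structure λ of A₀₉ lies in the closure of the GL(5,ℂ)-orbit O(μ) of the structure μ of A₀₆ (closure in the standard topology on the space of bilinear maps ℂ⁵ × ℂ⁵ → ℂ⁵). -/

import Mathlib

open ContinuousLinearMap

/-- The underlying space `ℂⁿ`. -/
abbrev Vn (n : ℕ) := Fin n → ℂ

/-- The space of bilinear maps `ℂⁿ × ℂⁿ → ℂⁿ` (as continuous linear maps in two
arguments), carrying its standard topology as a finite-dimensional complex vector space. -/
abbrev Bil (n : ℕ) := Vn n →L[ℂ] Vn n →L[ℂ] Vn n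

/-- The action of `GL(n, ℂ)` on bilinear maps: `(g · μ)(x, y) = g (μ (g⁻¹ x) (g⁻¹ y))`. -/
noncomputable def act {n : ℕ} (g : Vn n ≃L[ℂ] Vn n) (μ : Bil n) : Bil n :=
  ((compL ℂ (Vn n) (Vn n) (Vn n)).flip (g.symm : Vn n →L[ℂ] Vn n)).comp
    (((compL ℂ (Vn n) (Vn n) (Vn n)) (g : Vn n →L[ℂ] Vn n)).comp
      (μ.comp (g.symm : Vn n →L[ℂ] Vn n)))

@[simp] lemma act_apply {n : ℕ} (g : Vn n ≃L[ℂ] Vn n) (μ : Bil n) (x y : Vn n) :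
    act g μ x y = g (μ (g.symm x) (g.symm y)) := rfl

/-- The orbit `O(μ)` of a bilinear map under the `GL(n, ℂ)`-action. -/
noncomputable def orbit {n : ℕ} (μ : Bil n) : Set (Bil n) :=
  {ν | ∃ g : Vn n ≃L[ℂ] Vn n, ν = act g μ}

/-- The standard basis `e₁, …, e₅` of `ℂ⁵` (zero-indexed: `e i` is `e_{i+1}`). -/
def e (i : Fin 5) : Vn 5 := Pi.single i 1

/-- Multiplication table of the algebra `𝐀06` (entry `(i, j)` is `eᵢ · eⱼ`). -/
def tblA06 : Fin 5 → Fin 5 → Vn 5 :=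
  ![![e 1, e 2, 0, 0, 0],
   ![e 2, 0, 0, 0, 0],
   ![0, 0, 0, 0, 0],
   ![0, 0, 0, e 4, 0],
   ![0, 0, 0, 0, 0]]

/-- Multiplication table of the algebra `𝐀09` (entry `(i, j)` is `eᵢ · eⱼ`). -/
def tblA09 : Fin 5 → Fin 5 → Vn 5 :=
  ![![0, e 3, e 4, 0, 0],
   ![e 3, 0, -e 4, 0, 0],
   ![e 4, -e 4, 0, 0, 0],
   ![0, 0, 0, 0, 0],
   ![0, 0, 0, 0, 0]]

/-!
For `t ≠ 0` the vectors `E₁ = t e₁ + e₄`, `E₂ = -t e₁ + e₄`, `E₃ = t⁻¹ e₂ + t e₄ + t⁻³ e₅`,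
`E₄ = -t² e₂ + e₅`, `E₅ = e₃ + t e₅` form a basis of `ℂ⁵`, and the structure constants of `𝐀06` in
this basis are polynomials in `t` that reduce to the table of `𝐀09` at `t = 0`. Transporting
`μ` along the change of basis gives points `g_t · μ` of the orbit with exactly these structure
constants, and since a bilinear map depends continuously on its structure constants (in finite
dimension the evaluation at basis pairs is a closed embedding), `g_t · μ → λ` as `t → 0`.
-/

open Filter Topology

section

variable {n : ℕ}

theorem bil_ext_single {B₁ B₂ : Bil n}
    (h : ∀ i j, B₁ (Pi.single i 1) (Pi.single j 1) = B₂ (Pi.single i 1) (Pi.single j 1)) :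
    B₁ = B₂ :=
  coe_injective <| (Pi.basisFun ℂ (Fin n)).ext fun i =>
    coe_injective <| (Pi.basisFun ℂ (Fin n)).ext fun j => by simpa using h i j

noncomputable def structConst : Bil n →L[ℂ] Fin n → Fin n → Vn n :=
  pi fun i => pi fun j =>
    (apply ℂ (Vn n) (Pi.single j 1)).comp (apply ℂ (Vn n →L[ℂ] Vn n) (Pi.single i 1))

theorem isClosedEmbedding_structConst : Topology.IsClosedEmbedding (structConst (n := n)) :=
  LinearMap.isClosedEmbedding_of_injective (f := structConst.toLinearMap) <|
    LinearMap.ker_eq_bot.2 fun _ _ h => bil_ext_single fun i j => congrFun (congrFun h i) j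

theorem tendsto_bil_iff {ι : Type*} {l : Filter ι} {f : ι → Bil n} {ν : Bil n} :
    Tendsto f l (𝓝 ν) ↔ ∀ i j, Tendsto (fun s => f s (Pi.single i 1) (Pi.single j 1)) l
      (𝓝 (ν (Pi.single i 1) (Pi.single j 1))) := by
  rw [isClosedEmbedding_structConst.isInducing.tendsto_nhds_iff, tendsto_pi_nhds]
  exact forall_congr' fun i => tendsto_pi_nhds

theorem mem_closure_orbit_of_tendsto {ι : Type*} {l : Filter ι} [l.NeBot]
    {μ ν : Bil n} (g : ι → Vn n ≃L[ℂ] Vn n)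
    (h : ∀ i j, Tendsto (fun s => act (g s) μ (Pi.single i 1) (Pi.single j 1)) l
      (𝓝 (ν (Pi.single i 1) (Pi.single j 1)))) :
    ν ∈ closure (orbit μ) :=
  mem_closure_of_tendsto (tendsto_bil_iff.2 h) (Eventually.of_forall fun s => ⟨g s, rfl⟩)

theorem act_equivFun_single (E : Module.Basis (Fin n) ℂ (Vn n)) (μ : Bil n) (i j : Fin n) :
    act E.equivFun.toContinuousLinearEquiv μ (Pi.single i 1) (Pi.single j 1) =
      E.equivFun (μ (E i) (E j)) := by
  simp

end

theorem apply_eq_of_tblA06 {μ : Bil 5} (hμ : ∀ i j : Fin 5, μ (e i) (e j) = tblA06 i j) (x y : Vn 5) :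
    μ x y = (x 0 * y 0) • e 1 + (x 0 * y 1 + x 1 * y 0) • e 2 + (x 3 * y 3) • e 4 := by
  have expand : ∀ z : Vn 5, z = ∑ i, z i • e i := fun z => by
    simpa [e] using ((Pi.basisFun ℂ (Fin 5)).sum_repr z).symm
  conv_lhs => rw [expand x, expand y]
  simp only [Fin.sum_univ_five, map_add, map_smul, add_apply, smul_apply, hμ]
  simp [tblA06]
  module

noncomputable def degenVec (t : ℂ) : Fin 5 → Vn 5 :=
  ![t • e 0 + e 3,
    (-t) • e 0 + e 3,
    t⁻¹ • e 1 + t • e 3 + t⁻¹ ^ 3 • e 4,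
    (-t ^ 2) • e 1 + e 4,
    e 2 + t • e 4]

theorem top_le_span_degenVec {t : ℂ} (ht : t ≠ 0) :
    ⊤ ≤ Submodule.span ℂ (Set.range (degenVec t)) := by
  rw [← (Pi.basisFun ℂ (Fin 5)).span_eq, Submodule.span_le]
  rintro _ ⟨k, rfl⟩
  rw [SetLike.mem_coe, Submodule.mem_span_range_iff_exists_fun]
  refine ⟨!![(2 * t)⁻¹, -(2 * t)⁻¹, 0, 0, 0;
      -(t ^ 2 / 4), -(t ^ 2 / 4), t / 2, -(2 * t ^ 2)⁻¹, 0;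
      t ^ 5 / 4, t ^ 5 / 4, -(t ^ 4 / 2), -(t / 2), 1;
      2⁻¹, 2⁻¹, 0, 0, 0;
      -(t ^ 4 / 4), -(t ^ 4 / 4), t ^ 3 / 2, 2⁻¹, 0] k, ?_⟩
  ext m
  fin_cases k <;> fin_cases m <;>
    simp [Fin.sum_univ_five, degenVec, e] <;> field_simp <;> ring

noncomputable def degenTable (t : ℂ) : Fin 5 → Fin 5 → Vn 5 :=
  let d := t ^ 3 • e 2 - (t ^ 4 / 2) • (e 0 + e 1)
  let c := -e 4 + t • e 3 + t ^ 4 • e 2 - (t ^ 5 / 2) • (e 0 + e 1)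
  let s := (t ^ 2 / 2) • e 3 + (t ^ 5 / 2) • e 2 - (t ^ 6 / 4) • (e 0 + e 1)
  let b := -t ^ 3 • e 4 + (t ^ 4 / 2) • e 3 + (t ^ 7 / 2) • e 2 - (t ^ 8 / 4) • (e 0 + e 1)
  ![![d, e 3, e 4, b, 0],
    ![e 3, d, c, -b, 0],
    ![e 4, c, s, 0, 0],
    ![b, -b, 0, 0, 0],
    ![0, 0, 0, 0, 0]]

theorem continuous_degenTable : Continuous degenTable := by
  unfold degenTable
  fun_prop

theorem degenTable_zero : degenTable 0 = tblA09 := by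
  simp [degenTable, tblA09]

theorem apply_degenVec_eq_sum {μ : Bil 5} (hμ : ∀ i j : Fin 5, μ (e i) (e j) = tblA06 i j) {t : ℂ}
    (ht : t ≠ 0) (i j : Fin 5) :
    μ (degenVec t i) (degenVec t j) = ∑ k, degenTable t i j k • degenVec t k := by
  have he : ∀ k m : Fin 5, e k m = if m = k then 1 else 0 := fun k m => Pi.single_apply k 1 m
  rw [apply_eq_of_tblA06 hμ, Fin.sum_univ_five]
  fin_cases i <;> fin_cases j <;>
    simp only [degenVec, degenTable, Fin.zero_eta, Fin.mk_one, Fin.reduceFinMk, Matrix.cons_val,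
      Pi.add_apply, Pi.smul_apply, Pi.neg_apply, Pi.sub_apply, Pi.zero_apply, he, Fin.reduceEq,
      if_true, if_false, smul_eq_mul] <;>
    match_scalars <;> field_simp <;> ring

noncomputable def degenBasis {t : ℂ} (ht : t ≠ 0) : Module.Basis (Fin 5) ℂ (Vn 5) :=
  basisOfTopLeSpanOfCardEqFinrank (degenVec t) (top_le_span_degenVec ht) (by simp)

theorem act_degenBasis_e {μ : Bil 5} (hμ : ∀ i j : Fin 5, μ (e i) (e j) = tblA06 i j) {t : ℂ}
    (ht : t ≠ 0) (i j : Fin 5) :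
    act (degenBasis ht).equivFun.toContinuousLinearEquiv μ (e i) (e j) = degenTable t i j := by
  have hE : ⇑(degenBasis ht) = degenVec t := coe_basisOfTopLeSpanOfCardEqFinrank _ _ _
  rw [e, e, act_equivFun_single, hE, apply_degenVec_eq_sum hμ ht, ← hE,
    ← Module.Basis.equivFun_symm_apply, LinearEquiv.apply_symm_apply]

/-- The $5$-dimensional nilpotent commutative associative algebra `𝐀06` degenerates to
`𝐀09`: the structure `λ` of `𝐀09` lies in the closure of
the `GL(5, ℂ)`-orbit `O(μ)` of the structure `μ` of `𝐀06`. -/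
theorem A06_deg_A09 (μ lam : Bil 5)
    (hμ : ∀ i j : Fin 5, μ (e i) (e j) = tblA06 i j)
    (hlam : ∀ i j : Fin 5, lam (e i) (e j) = tblA09 i j) :
    lam ∈ closure (orbit μ) := by
  let l := comap ((↑) : ({0}ᶜ : Set ℂ) → ℂ) (𝓝 0)
  have : l.NeBot := mem_closure_iff_comap_neBot.1 (by simp)
  refine mem_closure_orbit_of_tendsto (l := l)
    (fun t => (degenBasis t.2).equivFun.toContinuousLinearEquiv) fun i j => ?_
  have hentry : Tendsto (fun t : ℂ => degenTable t i j) (𝓝 0) (𝓝 (tblA09 i j)) := by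
    rw [← degenTable_zero]
    exact ((continuous_apply j).comp ((continuous_apply i).comp continuous_degenTable)).tendsto 0
  change Tendsto (fun t : ({0}ᶜ : Set ℂ) => act _ μ (e i) (e j)) l (𝓝 (lam (e i) (e j)))
  rw [hlam]
  exact (hentry.comp tendsto_comap).congr fun t => (act_degenBasis_e hμ t.2 i j).symm
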